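/- arXiv:2602.16152 — 2 statements merged into one kernel-verified Lean document; each statement's English description precedes it below -/
import Mathlib

section
/- For every n ≥ 7, if u and v are positions of the Fibonacci word F_n (1-based) with f_{n-2} + 2 ≤ u ≤ f_{n-1} − 1 and f_{n-1} + f_{n-3} ≤ v ≤ f_n − 1, then the pair {u, v} is not a string attractor of F_n. -/
/-- Fibonacci numbers: f 0 = f 1 = 1, f (n+2) = f (n+1) + f n. -/
def fib : ℕ → ℕ
  | 0 => 1
  | 1 => 1
  | n + 2 => fib (n + 1) + fib n

/-- Fibonacci words over {a, b}; `false` encodes `a`, `true` encodes `b`. -/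
def F : ℕ → List Bool
  | 0 => [true]
  | 1 => [false]
  | n + 2 => F (n + 1) ++ F n

/-- Singular words: S 0 = a, S 1 = b, S 2 = S 0 · S₋₁ · S 0 = aa,
and S n = S (n-2) · S (n-3) · S (n-2) for n ≥ 3. -/
def S : ℕ → List Bool
  | 0 => [false]
  | 1 => [true]
  | 2 => [false, false]
  | n + 3 => S (n + 1) ++ S n ++ S (n + 1)

/-- `w` occurs in `T` at (1-based) position `i`, i.e. `w = T[i .. i + |w| - 1]`. -/
def OccursAt {α : Type*} (T w : List α) (i : ℕ) : Prop :=
  1 ≤ i ∧ i + w.length ≤ T.length + 1 ∧ (T.drop (i - 1)).take w.length = w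

/-- `Γ` is a string attractor of `T`: a set of (1-based) positions of `T` such that
every nonempty substring of `T` has an occurrence crossing a position of `Γ`. -/
def IsAttractor {α : Type*} (T : List α) (Γ : Finset ℕ) : Prop :=
  (∀ k ∈ Γ, 1 ≤ k ∧ k ≤ T.length) ∧
  ∀ w : List α, w ≠ [] → w <:+: T →
    ∃ i, OccursAt T w i ∧ ∃ k ∈ Γ, i ≤ k ∧ k < i + w.length

/-- `Γ` is a smallest string attractor of `T`. -/
def IsSmallestAttractor {α : Type*} (T : List α) (Γ : Finset ℕ) : Prop :=
  IsAttractor T Γ ∧ ∀ Γ' : Finset ℕ, IsAttractor T Γ' → Γ.card ≤ Γ'.card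

/-- The set of all smallest string attractors of `T`. -/
def Att {α : Type*} (T : List α) : Set (Finset ℕ) := {Γ | IsSmallestAttractor T Γ}

/-! ### Auxiliary development -/


theorem fib_pos : ∀ m, 1 ≤ fib m
  | 0 => le_refl 1
  | 1 => le_refl 1
  | m + 2 => by have := fib_pos m; have := fib_pos (m+1); simp [fib]; omega

theorem F_len : ∀ n, (F n).length = fib n
  | 0 => rfl
  | 1 => rfl
  | n + 2 => by simp [F, fib, F_len (n+1), F_len n]

/-- The Fibonacci morphism: a = false ↦ ab, b = true ↦ a. -/
def phiF : List Bool → List Bool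
  | [] => []
  | false :: l => false :: true :: phiF l
  | true :: l => false :: phiF l

theorem phiF_append : ∀ l m : List Bool, phiF (l ++ m) = phiF l ++ phiF m
  | [], m => rfl
  | false :: l, m => by simp [phiF, phiF_append l m]
  | true :: l, m => by simp [phiF, phiF_append l m]

theorem F_phi : ∀ n, F (n + 1) = phiF (F n)
  | 0 => rfl
  | 1 => rfl
  | n + 2 => by
      show F (n+2) ++ F (n+1) = phiF (F (n+1) ++ F n)
      rw [phiF_append, ← F_phi (n+1), ← F_phi n]

theorem phiF_not_true (l r : List Bool) (h : phiF l = true :: r) : False := by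
  cases l with
  | nil => simp [phiF] at h
  | cons c l => cases c <;> simp [phiF] at h

theorem phiF_length : ∀ l : List Bool, (phiF l).length = l.length + l.count false
  | [] => rfl
  | false :: l => by simp [phiF, phiF_length l]; omega
  | true :: l => by simp [phiF, phiF_length l]; omega

theorem phiF_count : ∀ l : List Bool, (phiF l).count false = l.length
  | [] => rfl
  | false :: l => by simp [phiF, phiF_count l]
  | true :: l => by simp [phiF, phiF_count l]

theorem phiF_inj : ∀ l m : List Bool, phiF l = phiF m → l = m
  | [], [], _ => rfl
  | [], c :: m, h => by cases c <;> simp [phiF] at h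
  | c :: l, [], h => by cases c <;> simp [phiF] at h
  | c :: l, d :: m, h => by
      cases c <;> cases d <;> simp [phiF] at h
      · exact congrArg (false :: ·) (phiF_inj l m h)
      · exact absurd h (fun hh => phiF_not_true m _ hh.symm)
      · exact absurd h (fun hh => phiF_not_true l _ hh)
      · exact congrArg (true :: ·) (phiF_inj l m h)

/-- Left alignment: an occurrence starting with `a` starts at a block boundary. -/
theorem phiF_left : ∀ T X Y : List Bool, phiF T = X ++ false :: Y →
    ∃ A B, T = A ++ B ∧ phiF A = X ∧ phiF B = false :: Y := by
  intro T
  induction T with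
  | nil => intro X Y h; simp [phiF] at h
  | cons c T ih =>
    intro X Y h
    cases c
    · rcases X with _ | ⟨x, _ | ⟨x', X'⟩⟩
      · exact ⟨[], false :: T, by simp, rfl, by simpa using h⟩
      · simp [phiF] at h
      · simp only [phiF, List.cons_append, List.cons.injEq] at h
        obtain ⟨hx, hx', h'⟩ := h
        obtain ⟨A, B, rfl, hA, hB⟩ := ih X' Y h'
        exact ⟨false :: A, B, by simp, by simp [phiF, hA, ← hx, ← hx'], hB⟩
    · rcases X with _ | ⟨x, X'⟩
      · exact ⟨[], true :: T, by simp, rfl, by simpa using h⟩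
      · simp only [phiF, List.cons_append, List.cons.injEq] at h
        obtain ⟨hx, h'⟩ := h
        obtain ⟨A, B, rfl, hA, hB⟩ := ih X' Y h'
        exact ⟨true :: A, B, by simp, by simp [phiF, hA, ← hx], hB⟩

/-- Right alignment: a `b` always ends a block. -/
theorem phiF_right : ∀ T X Y : List Bool, phiF T = X ++ true :: Y →
    ∃ A B, T = A ++ B ∧ phiF A = X ++ [true] ∧ phiF B = Y := by
  intro T
  induction T with
  | nil => intro X Y h; simp [phiF] at h
  | cons c T ih =>
    intro X Y h
    cases c
    · rcases X with _ | ⟨x, _ | ⟨x', X'⟩⟩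
      · simp [phiF] at h
      · simp only [phiF, List.cons_append, List.nil_append, List.cons.injEq] at h
        obtain ⟨hx, h'⟩ := h
        exact ⟨[false], T, by simp, by simp [phiF, ← hx], h'.2⟩
      · simp only [phiF, List.cons_append, List.cons.injEq] at h
        obtain ⟨hx, hx', h'⟩ := h
        obtain ⟨A, B, rfl, hA, hB⟩ := ih X' Y h'
        exact ⟨false :: A, B, by simp, by simp [phiF, hA, ← hx, ← hx'], hB⟩
    · rcases X with _ | ⟨x, X'⟩
      · simp [phiF] at h
      · simp only [phiF, List.cons_append, List.cons.injEq] at h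
        obtain ⟨hx, h'⟩ := h
        obtain ⟨A, B, rfl, hA, hB⟩ := ih X' Y h'
        exact ⟨true :: A, B, by simp, by simp [phiF, hA, ← hx], hB⟩

/-! ### no `bb`, no `aaa` -/

theorem no_bb_phiF : ∀ l : List Bool, ¬ [true, true] <:+: phiF l := by
  intro l
  induction l with
  | nil => simp [phiF]
  | cons c l ih =>
    cases c
    · show ¬ _ <:+: false :: true :: phiF l
      rw [List.infix_cons_iff]
      rintro (hp | h)
      · obtain ⟨t, ht⟩ := hp; simp at ht
      · rw [List.infix_cons_iff] at h
        rcases h with hp | h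
        · obtain ⟨t, ht⟩ := hp
          simp only [List.cons_append, List.cons.injEq] at ht
          exact phiF_not_true l _ ht.2.symm
        · exact ih h
    · show ¬ _ <:+: false :: phiF l
      rw [List.infix_cons_iff]
      rintro (hp | h)
      · obtain ⟨t, ht⟩ := hp; simp at ht
      · exact ih h

theorem aaa_phiF : ∀ l : List Bool, [false, false, false] <:+: phiF l → [true, true] <:+: l := by
  intro l
  induction l with
  | nil => simp [phiF]
  | cons c l ih =>
    cases c
    · show _ <:+: false :: true :: phiF l → _
      rw [List.infix_cons_iff]
      rintro (hp | h)
      · obtain ⟨t, ht⟩ := hp; simp at ht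
      · rw [List.infix_cons_iff] at h
        rcases h with hp | h
        · obtain ⟨t, ht⟩ := hp; simp at ht
        · exact (ih h).trans (List.infix_cons (List.infix_refl l))
    · show _ <:+: false :: phiF l → _
      rw [List.infix_cons_iff]
      rintro (hp | h)
      · obtain ⟨t, ht⟩ := hp
        simp only [List.cons_append, List.cons.injEq, true_and] at ht
        -- ht : phiF l = false :: false :: t
        cases l with
        | nil => simp [phiF] at ht
        | cons d l' =>
          cases d
          · simp [phiF] at ht
          · refine ⟨[], l', by simp⟩
      · exact (ih h).trans (List.infix_cons (List.infix_refl l))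

theorem no_bb_F (m : ℕ) : ¬ [true, true] <:+: F (m + 1) := by
  rw [F_phi m]; exact no_bb_phiF _

theorem no_aaa_F (m : ℕ) : ¬ [false, false, false] <:+: F (m + 2) := by
  rw [F_phi (m+1), F_phi m]
  intro h
  exact no_bb_phiF _ (aaa_phiF _ h)

/-! ### prefixes and last letters of F -/

theorem F_prefix : ∀ m n : ℕ, 1 ≤ m → m ≤ n → F m <+: F n := by
  intro m n hm
  induction n with
  | zero => omega
  | succ n ih =>
    intro hmn
    rcases eq_or_lt_of_le hmn with rfl | hlt
    · exact List.prefix_refl _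
    · have hmn' : m ≤ n := by omega
      have h1 : 1 ≤ n := le_trans hm hmn'
      have : F (n + 1) = F n ++ F (n - 1) := by
        obtain ⟨n', rfl⟩ : ∃ n', n = n' + 1 := ⟨n - 1, by omega⟩
        rfl
      rw [this]
      exact (ih hmn').trans (List.prefix_append _ _)

theorem F_last_pair : ∀ j : ℕ, (∃ W, F (2*j+1) = W ++ [false]) ∧ (∃ W, F (2*j+2) = W ++ [true])
  | 0 => ⟨⟨[], rfl⟩, ⟨[false], rfl⟩⟩
  | j + 1 => by
    obtain ⟨⟨W1, h1⟩, ⟨W2, h2⟩⟩ := F_last_pair j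
    constructor
    · refine ⟨F (2*j+2) ++ W1, ?_⟩
      have : 2*(j+1)+1 = (2*j+1) + 2 := by ring
      rw [this]
      show F (2*j+2) ++ F (2*j+1) = _
      rw [h1, List.append_assoc]
    · refine ⟨F (2*(j+1)+1) ++ W2, ?_⟩
      have : 2*(j+1)+2 = (2*j+2) + 2 := by ring
      rw [this]
      show F (2*j+3) ++ F (2*j+2) = _
      rw [h2, ← List.append_assoc]
      congr 1

theorem F_last_even (m : ℕ) (h2 : 2 ≤ m) (he : m % 2 = 0) : ∃ W, F m = W ++ [true] := by
  obtain ⟨j, rfl⟩ : ∃ j, m = 2*j+2 := ⟨m/2 - 1, by omega⟩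
  exact (F_last_pair j).2

theorem F_last_odd (m : ℕ) (he : m % 2 = 1) : ∃ W, F m = W ++ [false] := by
  obtain ⟨j, rfl⟩ : ∃ j, m = 2*j+1 := ⟨m/2, by omega⟩
  exact (F_last_pair j).1

/-- Computing the image length of a prefix of `F j` of length `fib m - 1`. -/
theorem phiF_prefix_len_even (j m : ℕ) (hm : 2 ≤ m) (hmj : m ≤ j) (he : m % 2 = 0)
    (A R : List Bool) (h : F j = A ++ R) (hA : A.length = fib m - 1) :
    (phiF A).length = fib (m+1) - 1 := by
  obtain ⟨W, hW⟩ := F_last_even m hm he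
  have hWlen : W.length = fib m - 1 := by
    have := F_len m
    rw [hW] at this; simp at this; omega
  have hAW : A = W := by
    obtain ⟨R', hR'⟩ := F_prefix m j (by omega) hmj
    have e1 : A = (F j).take (fib m - 1) := by
      rw [h, ← hA, List.take_left]
    have e2 : W = (F j).take (fib m - 1) := by
      rw [← hR', List.take_append_of_le_length, hW, ← hWlen, List.take_left]
      rw [F_len]; omega
    rw [e1, e2]
  subst hAW
  have : F (m+1) = phiF A ++ [false] := by
    rw [F_phi m, hW, phiF_append]; rfl
  have hlen := F_len (m+1)
  rw [this] at hlen; simp at hlen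
  omega

theorem phiF_prefix_len_odd (j m : ℕ) (hm : 1 ≤ m) (hmj : m ≤ j) (he : m % 2 = 1)
    (A R : List Bool) (h : F j = A ++ R) (hA : A.length = fib m - 1) :
    (phiF A).length = fib (m+1) - 2 := by
  obtain ⟨W, hW⟩ := F_last_odd m he
  have hWlen : W.length = fib m - 1 := by
    have := F_len m
    rw [hW] at this; simp at this; omega
  have hAW : A = W := by
    obtain ⟨R', hR'⟩ := F_prefix m j hm hmj
    have e1 : A = (F j).take (fib m - 1) := by
      rw [h, ← hA, List.take_left]
    have e2 : W = (F j).take (fib m - 1) := by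
      rw [← hR', List.take_append_of_le_length, hW, ← hWlen, List.take_left]
      rw [F_len]; omega
    rw [e1, e2]
  subst hAW
  have : F (m+1) = phiF A ++ [false, true] := by
    rw [F_phi m, hW, phiF_append]; rfl
  have hlen := F_len (m+1)
  rw [this] at hlen; simp at hlen
  omega

/-! ### the witness word -/

/-- `qw k` is the core of the witness word for `F (k+7)`. -/
def qw : ℕ → List Bool
  | 0 => [true, false, true, false]
  | k + 1 => if k % 2 = 0 then phiF (qw k) else (phiF (qw k)).tail

theorem qw_inv : ∀ k : ℕ,
    ((k % 2 = 0 → (∃ z, qw k = true :: z) ∧ (∃ y, qw k = y ++ [true, false]) ∧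
        (qw k).count false = fib (k+2)) ∧
     (k % 2 = 1 → (∃ z, qw k = false :: z) ∧ (∃ y, qw k = y ++ [false, false, true]) ∧
        (qw k).count false = fib (k+2) + 1)) ∧
    (qw k).length = fib (k+3) + 1 := by
  intro k
  induction k with
  | zero =>
    refine ⟨⟨fun _ => ⟨⟨[false, true, false], rfl⟩, ⟨[true, false], rfl⟩, by decide⟩,
      fun h => by omega⟩, by decide⟩
  | succ k ih =>
    obtain ⟨⟨ihe, iho⟩, ihlen⟩ := ih
    rcases Nat.mod_two_eq_zero_or_one k with hk | hk
    · -- k even, k+1 odd : qw (k+1) = phiF (qw k)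
      obtain ⟨⟨z, hz⟩, ⟨y, hy⟩, hcf⟩ := ihe hk
      have hq : qw (k+1) = phiF (qw k) := by simp [qw, hk]
      have hlen : (qw (k+1)).length = fib (k+4) + 1 := by
        rw [hq, phiF_length, ihlen, hcf]
        have : fib (k+4) = fib (k+3) + fib (k+2) := rfl
        omega
      refine ⟨⟨fun h => by omega, fun _ => ?_⟩, hlen⟩
      refine ⟨⟨phiF z, by rw [hq, hz]; rfl⟩, ⟨phiF y, ?_⟩, ?_⟩
      · rw [hq, hy, phiF_append]; rfl
      · rw [hq, phiF_count, ihlen]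
    · -- k odd, k+1 even : qw (k+1) = (phiF (qw k)).tail
      obtain ⟨⟨z, hz⟩, ⟨y, hy⟩, hcf⟩ := iho hk
      have hq : phiF (qw k) = false :: qw (k+1) := by
        simp only [qw, hk]
        rw [hz]
        simp [phiF]
      have hlen : (qw (k+1)).length = fib (k+4) + 1 := by
        have h1 : (phiF (qw k)).length = (qw k).length + (qw k).count false := phiF_length _
        rw [hq] at h1
        simp at h1
        rw [ihlen, hcf] at h1
        have : fib (k+4) = fib (k+3) + fib (k+2) := rfl
        omega
      refine ⟨⟨fun _ => ?_, fun h => by omega⟩, hlen⟩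
      have hqz : qw (k+1) = true :: phiF z := by
        have : phiF (qw k) = false :: true :: phiF z := by rw [hz]; rfl
        rw [hq] at this
        exact (List.cons.injEq _ _ _ _ ▸ this).2
      refine ⟨⟨phiF z, hqz⟩, ?_, ?_⟩
      · -- suffix [true, false]
        have h2 : false :: qw (k+1) = (phiF y ++ [false, true, false]) ++ [true, false] := by
          rw [← hq, hy, phiF_append]
          simp [phiF]
        rcases y with _ | ⟨c, y'⟩
        · simp [phiF] at h2
          exact ⟨[true, false], by rw [h2]; rfl⟩
        · have hhd : ∃ L', phiF (c :: y') ++ [false, true, false] = false :: L' := by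
            cases c <;> exact ⟨_, rfl⟩
          obtain ⟨L', hL'⟩ := hhd
          rw [hL'] at h2
          simp only [List.cons_append, List.cons.injEq, true_and] at h2
          exact ⟨L', h2⟩
      · -- count false
        have h1 : (phiF (qw k)).count false = (qw k).length := phiF_count _
        rw [hq] at h1
        simp [List.count_cons] at h1
        rw [ihlen] at h1
        show (qw (k+1)).count false = fib (k+3)
        omega

theorem qw_len (k : ℕ) : (qw k).length = fib (k+3) + 1 := (qw_inv k).2

theorem qw_head_even (k : ℕ) (h : k % 2 = 0) : ∃ z, qw k = true :: z := ((qw_inv k).1.1 h).1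
theorem qw_head_odd (k : ℕ) (h : k % 2 = 1) : ∃ z, qw k = false :: z := ((qw_inv k).1.2 h).1
theorem qw_suf_even (k : ℕ) (h : k % 2 = 0) : ∃ y, qw k = y ++ [true, false] := ((qw_inv k).1.1 h).2.1
theorem qw_suf_odd (k : ℕ) (h : k % 2 = 1) : ∃ y, qw k = y ++ [false, false, true] := ((qw_inv k).1.2 h).2.1

theorem qw_phi_odd (k : ℕ) (h : k % 2 = 1) : phiF (qw k) = false :: qw (k+1) := by
  obtain ⟨z, hz⟩ := qw_head_odd k h
  simp only [qw, h]
  rw [hz]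
  simp [phiF]

/-- Existence of the witness occurrence. -/
theorem qw_exists : ∀ k : ℕ, ∃ A B, F (k+7) = A ++ (qw k ++ [false]) ++ B
  | 0 => ⟨[false, true, false, false],
      [true, false, false, true, false, true, false, false, true, false, true, false],
      by decide⟩
  | k + 1 => by
    obtain ⟨A, B, h⟩ := qw_exists k
    have hF : F (k+8) = phiF A ++ phiF (qw k) ++ [false, true] ++ phiF B := by
      rw [show k+8 = (k+7)+1 from rfl, F_phi (k+7), h]
      simp only [phiF_append]
      simp [phiF]
    rcases Nat.mod_two_eq_zero_or_one k with hk | hk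
    · have hq : qw (k+1) = phiF (qw k) := by simp [qw, hk]
      refine ⟨phiF A, true :: phiF B, ?_⟩
      rw [show k+1+7 = k+8 from rfl, hF, hq]
      simp
    · have hq : phiF (qw k) = false :: qw (k+1) := qw_phi_odd k hk
      refine ⟨phiF A ++ [false], true :: phiF B, ?_⟩
      rw [show k+1+7 = k+8 from rfl, hF, hq]
      simp

/-! ### uniqueness of occurrences of the witness core -/

theorem qw_unique : ∀ k : ℕ, ∀ X Y : List Bool,
    F (k+7) = X ++ qw k ++ Y → Y ≠ [] →
    X.length = fib (k+4) - 1 ∨ X.length = fib (k+6) - 1 := by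
  intro k
  induction k with
  | zero =>
    intro X Y h hY
    have hlen : X.length + 4 + Y.length = 21 := by
      have := congrArg List.length h
      simp [qw] at this
      have h21 : (F 7).length = 21 := by decide
      omega
    have hY1 : 1 ≤ Y.length := by
      cases Y with
      | nil => exact absurd rfl hY
      | cons a l => simp
    have hd : ((F 7).drop X.length).take 4 = qw 0 := by
      have h' : F 7 = X ++ (qw 0 ++ Y) := by rw [h, List.append_assoc]
      rw [h', List.drop_left]
      have : (4 : ℕ) = (qw 0).length := by decide
      rw [this, List.take_left]
    have key : ∀ ℓ < 17, ((F 7).drop ℓ).take 4 = qw 0 → ℓ = 4 ∨ ℓ = 12 := by decide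
    have hfib4 : fib (0+4) = 5 := by decide
    have hfib6 : fib (0+6) = 13 := by decide
    have := key X.length (by omega) hd
    omega
  | succ k ih =>
    intro X Y hsplit hY
    rcases Nat.mod_two_eq_zero_or_one k with hk | hk
    · -- k even
      have hq : qw (k+1) = phiF (qw k) := by simp [qw, hk]
      obtain ⟨z, hz⟩ := qw_head_even k hk
      have hq2 : qw (k+1) = false :: phiF z := by rw [hq, hz]; rfl
      have h8 : phiF (F (k+7)) = X ++ (false :: (phiF z ++ Y)) := by
        rw [← F_phi (k+7)]
        show F (k+8) = _
        rw [show F (k+8) = F (k+1+7) from rfl, hsplit, hq2]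
        simp
      obtain ⟨A, B, hAB, hA, hB⟩ := phiF_left (F (k+7)) X _ h8
      obtain ⟨y, hy⟩ := qw_suf_even k hk
      have hqphi : phiF (qw k) = phiF y ++ [false, false, true] := by
        rw [hy, phiF_append]; rfl
      have hBe : phiF B = (phiF y ++ [false, false]) ++ true :: Y := by
        rw [hB]
        have : false :: (phiF z ++ Y) = (false :: phiF z) ++ Y := by simp
        rw [this, ← hq2, hq, hqphi]
        simp
      obtain ⟨B1, B2, hBs, hB1, hB2⟩ := phiF_right B _ _ hBe
      have hB1q : B1 = qw k := by
        apply phiF_inj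
        rw [hB1, hqphi]
        simp
      have hB2ne : B2 ≠ [] := by
        rintro rfl
        exact hY (by rw [← hB2]; rfl)
      have hIH := ih A B2 (by rw [hAB, hBs, hB1q]; simp) hB2ne
      have hXlen : X.length = (phiF A).length := by rw [hA]
      rcases hIH with h4 | h6
      · left
        have hpl := phiF_prefix_len_even (k+7) (k+4) (by omega) (by omega) (by omega)
          A B hAB h4
        show X.length = fib (k+5) - 1
        rw [hXlen, hpl]
      · right
        have hpl := phiF_prefix_len_even (k+7) (k+6) (by omega) (by omega) (by omega)
          A B hAB h6
        show X.length = fib (k+7) - 1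
        rw [hXlen, hpl]
    · -- k odd
      have hq : qw (k+1) = (phiF (qw k)).tail := by simp [qw, hk]
      obtain ⟨z, hz⟩ := qw_head_odd k hk
      have hphiq : phiF (qw k) = false :: true :: phiF z := by rw [hz]; rfl
      have hq2 : qw (k+1) = true :: phiF z := by rw [hq, hphiq]; rfl
      have h8 : phiF (F (k+7)) = X ++ (true :: phiF z) ++ Y := by
        rw [← F_phi (k+7)]
        show F (k+8) = _
        rw [show F (k+8) = F (k+1+7) from rfl, hsplit, hq2]
      have hXne : X ≠ [] := by
        rintro rfl
        simp only [List.nil_append] at h8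
        exact phiF_not_true (F (k+7)) _ h8
      obtain ⟨X', c, hXc⟩ := (X.eq_nil_or_concat).resolve_left hXne
      rw [List.concat_eq_append] at hXc
      cases c
      · -- c = false : the aligned case
        have h9 : phiF (F (k+7)) = X' ++ (false :: (true :: phiF z ++ Y)) := by
          rw [h8, hXc]; simp
        obtain ⟨A, B, hAB, hA, hB⟩ := phiF_left (F (k+7)) X' _ h9
        obtain ⟨y, hy⟩ := qw_suf_odd k hk
        have hqphi : phiF (qw k) = phiF y ++ [false, true, false, true, false] := by
          rw [hy, phiF_append]; rfl
        have hBe : phiF B = (phiF y ++ [false, true, false]) ++ true :: (false :: Y) := by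
          rw [hB]
          have e1 : false :: (true :: phiF z ++ Y) = (false :: true :: phiF z) ++ Y := by simp
          rw [e1, ← hphiq, hqphi]
          simp
        obtain ⟨B1, B2, hBs, hB1, hB2⟩ := phiF_right B _ _ hBe
        have hB1q : B1 = y ++ [false, false] := by
          apply phiF_inj
          rw [hB1, phiF_append]
          show _ = phiF y ++ [false, true, false, true]
          simp
        cases B2 with
        | nil => simp [phiF] at hB2
        | cons d B2' =>
          cases d
          · -- d = false: produces aaa
            exfalso
            have haaa : [false, false, false] <:+: F (k+7) := by
              refine ⟨A ++ y, B2', ?_⟩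
              rw [hAB, hBs, hB1q]
              simp
            exact no_aaa_F (k+5) haaa
          · -- d = true: genuine occurrence of qw k
            have hB2' : phiF B2' = Y := by
              have : phiF (true :: B2') = false :: phiF B2' := rfl
              rw [this] at hB2
              exact (List.cons.injEq _ _ _ _ ▸ hB2).2
            have hB2ne : B2' ≠ [] := by
              rintro rfl
              exact hY (by rw [← hB2']; rfl)
            have hsplit' : F (k+7) = A ++ qw k ++ B2' := by
              rw [hAB, hBs, hB1q, hy]
              simp
            have hIH := ih A B2' hsplit' hB2ne
            have hX'len : X'.length = (phiF A).length := by rw [hA]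
            have hXlen : X.length = X'.length + 1 := by rw [hXc]; simp
            rcases hIH with h4 | h6
            · left
              have hpl := phiF_prefix_len_odd (k+7) (k+4) (by omega) (by omega) (by omega)
                A B hAB h4
              have hf5 : 2 ≤ fib (k+5) := by
                have h1 := fib_pos (k+3)
                have h2 := fib_pos (k+4)
                have : fib (k+5) = fib (k+4) + fib (k+3) := rfl
                omega
              have erfl : fib (k+4+1) = fib (k+5) := rfl
              rw [erfl] at hpl
              show X.length = fib (k+5) - 1
              omega
            · right
              have hpl := phiF_prefix_len_odd (k+7) (k+6) (by omega) (by omega) (by omega)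
                A B hAB h6
              have hf7 : 2 ≤ fib (k+7) := by
                have h1 := fib_pos (k+5)
                have h2 := fib_pos (k+6)
                have : fib (k+7) = fib (k+6) + fib (k+5) := rfl
                omega
              have erfl : fib (k+6+1) = fib (k+7) := rfl
              rw [erfl] at hpl
              show X.length = fib (k+7) - 1
              omega
      · -- c = true : bb impossible
        exfalso
        have hbb : [true, true] <:+: phiF (F (k+7)) := by
          refine ⟨X', phiF z ++ Y, ?_⟩
          rw [h8, hXc]
          simp
        exact no_bb_phiF _ hbb

/-- For every n ≥ 7, if f_{n-2} + 2 ≤ u ≤ f_{n-1} − 1 and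
f_{n-1} + f_{n-3} ≤ v ≤ f_n − 1, then {u, v} is not a string attractor of F_n. -/
theorem fib_invalid_attractor_pairs :
    ∀ n : ℕ, 7 ≤ n → ∀ u v : ℕ,
      fib (n - 2) + 2 ≤ u → u ≤ fib (n - 1) - 1 →
      fib (n - 1) + fib (n - 3) ≤ v → v ≤ fib n - 1 →
      ¬ IsAttractor (F n) {u, v} := by
  intro n hn u v hu1 hu2 hv1 hv2 hAtt
  obtain ⟨k, rfl⟩ : ∃ k, n = k + 7 := ⟨n - 7, by omega⟩
  rw [show k + 7 - 2 = k + 5 from by omega] at hu1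
  rw [show k + 7 - 1 = k + 6 from by omega] at hu2
  rw [show k + 7 - 1 = k + 6 from by omega, show k + 7 - 3 = k + 4 from by omega] at hv1
  obtain ⟨hbound, hcov⟩ := hAtt
  obtain ⟨A, B, hAB⟩ := qw_exists k
  have hinf : qw k ++ [false] <:+: F (k+7) := ⟨A, B, hAB.symm⟩
  have hne : qw k ++ [false] ≠ [] := by simp
  obtain ⟨i, ⟨hi1, hi2, hi3⟩, p, hp, hpi1, hpi2⟩ := hcov _ hne hinf
  have hwlen : (qw k ++ [false]).length = fib (k+3) + 2 := by
    simp [qw_len]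
  have hFlen : (F (k+7)).length = fib (k+7) := F_len _
  set T := F (k+7) with hT
  set R := (T.drop (i-1)).drop (qw k ++ [false]).length with hR
  have hdrop : T.drop (i-1) = (qw k ++ [false]) ++ R := by
    conv_lhs => rw [← List.take_append_drop (qw k ++ [false]).length (T.drop (i-1))]
    rw [hi3, hR]
  have hsplit : T = T.take (i-1) ++ qw k ++ (false :: R) := by
    conv_lhs => rw [← List.take_append_drop (i-1) T]
    rw [hdrop]
    simp
  have hXlen : (T.take (i-1)).length = i - 1 := by
    rw [List.length_take]
    have h1 : 1 ≤ fib (k+3) := fib_pos _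
    omega
  have hkey := qw_unique k _ _ hsplit (by simp)
  rw [hXlen] at hkey
  have hp' : p = u ∨ p = v := by simpa using hp
  have f5 : fib (k+5) = fib (k+4) + fib (k+3) := rfl
  have f6 : fib (k+6) = fib (k+5) + fib (k+4) := rfl
  have f4 : fib (k+4) = fib (k+3) + fib (k+2) := rfl
  have f2 : fib (k+2) = fib (k+1) + fib k := rfl
  have p1 := fib_pos k
  have p2 := fib_pos (k+1)
  have p3 := fib_pos (k+3)
  have p4 := fib_pos (k+4)
  rw [hwlen] at hpi2
  omega
end

section
/- For every k ≥ 2 the following reflection identities hold: R_k = {(f_{k+3} − 1) − x : x ∈ L_k}, and L_{k+2} = {(f_{k+4} − 1) − x : x ∈ L_k ∪ R_k}. -/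
/-- The position sets L_k: L_2 = {3}, L_3 = {5},
L_k = (L_{k-2} ∪ R_{k-2}) ⊕ f_k for k ≥ 4 (with R_{k-2} = L_{k-2} ⊕ f_{k-3}). -/
def Lset : ℕ → Finset ℕ
  | 0 => ∅
  | 1 => ∅
  | 2 => {3}
  | 3 => {5}
  | k + 4 => ((Lset (k + 2)) ∪ (Lset (k + 2)).image (· + fib (k + 1))).image (· + fib (k + 4))

/-- The position sets R_k = L_k ⊕ f_{k-1} (so R_2 = {4}, R_3 = {7}). -/
def Rset (k : ℕ) : Finset ℕ := (Lset k).image (· + fib (k - 1))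

lemma fib_pos_s11 : ∀ n, 0 < fib n
  | 0 => by simp [fib]
  | 1 => by simp [fib]
  | n + 2 => by have := fib_pos_s11 n; have := fib_pos_s11 (n+1); show 0 < fib (n+1) + fib n; omega

lemma Rset_eq (k j : ℕ) (h : k = j + 1) : Rset k = (Lset k).image (· + fib j) := by
  subst h; rfl

lemma image_image_congr (s : Finset ℕ) (f g h : ℕ → ℕ)
    (H : ∀ x ∈ s, g (f x) = h x) : (s.image f).image g = s.image h := by
  rw [Finset.image_image]
  exact Finset.image_congr fun x hx => H x hx

lemma lset_lt : ∀ k, ∀ x ∈ Lset k, x < fib (k + 2) := by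
  intro k
  induction k using Nat.strong_induction_on with
  | _ k ih =>
    match k with
    | 0 => simp [Lset]
    | 1 => simp [Lset]
    | 2 => decide
    | 3 => decide
    | m + 4 =>
      intro x hx
      simp only [Lset, Finset.mem_image, Finset.mem_union] at hx
      obtain ⟨y, hy, rfl⟩ := hx
      have e6 : fib (m + 6) = fib (m + 5) + fib (m + 4) := rfl
      have e5 : fib (m + 5) = fib (m + 4) + fib (m + 3) := rfl
      have e4 : fib (m + 4) = fib (m + 3) + fib (m + 2) := rfl
      have e3 : fib (m + 3) = fib (m + 2) + fib (m + 1) := rfl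
      have hp2 := fib_pos_s11 (m + 2)
      show y + fib (m + 4) < fib (m + 6)
      rcases hy with hy | hy
      · have h : y < fib (m + 4) := ih (m + 2) (by omega) y hy
        omega
      · obtain ⟨z, hz, rfl⟩ := hy
        have h : z < fib (m + 4) := ih (m + 2) (by omega) z hz
        omega

lemma lrset_lt (k : ℕ) : ∀ x ∈ Lset (k + 2) ∪ Rset (k + 2), x < fib (k + 5) := by
  intro x hx
  have e5 : fib (k + 5) = fib (k + 4) + fib (k + 3) := rfl
  have e4 : fib (k + 4) = fib (k + 3) + fib (k + 2) := rfl
  have e3 : fib (k + 3) = fib (k + 2) + fib (k + 1) := rfl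
  have hp2 := fib_pos_s11 (k + 2)
  rcases Finset.mem_union.1 hx with hy | hy
  · have h : x < fib (k + 4) := lset_lt (k + 2) x hy
    omega
  · rw [Rset_eq (k + 2) (k + 1) rfl] at hy
    simp only [Finset.mem_image] at hy
    obtain ⟨z, hz, rfl⟩ := hy
    have h : z < fib (k + 4) := lset_lt (k + 2) z hz
    omega

lemma aux : ∀ n : ℕ,
    Rset (n + 2) = (Lset (n + 2)).image (fun x => fib (n + 5) - 1 - x) ∧
    Lset (n + 4) = (Lset (n + 2) ∪ Rset (n + 2)).image (fun x => fib (n + 6) - 1 - x) := by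
  intro n
  induction n using Nat.strong_induction_on with
  | _ n ih =>
    match n with
    | 0 => exact ⟨by decide, by decide⟩
    | 1 => exact ⟨by decide, by decide⟩
    | m + 2 =>
      obtain ⟨ihA, ihB⟩ := ih m (by omega)
      set U : Finset ℕ := Lset (m + 2) ∪ Rset (m + 2) with hU
      have hUlt : ∀ u ∈ U, u < fib (m + 5) := lrset_lt m
      have e5 : fib (m + 5) = fib (m + 4) + fib (m + 3) := rfl
      have e6 : fib (m + 6) = fib (m + 5) + fib (m + 4) := rfl
      have e7 : fib (m + 7) = fib (m + 6) + fib (m + 5) := rfl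
      have e8 : fib (m + 8) = fib (m + 7) + fib (m + 6) := rfl
      have hp3 := fib_pos_s11 (m + 3)
      have hp4 := fib_pos_s11 (m + 4)
      have hp5 := fib_pos_s11 (m + 5)
      have hLdef : Lset (m + 4) = U.image (· + fib (m + 4)) := by
        show ((Lset (m + 2)) ∪ (Lset (m + 2)).image (· + fib (m + 1))).image (· + fib (m + 4)) = _
        rw [hU, Rset_eq (m + 2) (m + 1) rfl]
      have hRdef : Rset (m + 4) = U.image (· + fib (m + 5)) := by
        rw [Rset_eq (m + 4) (m + 3) rfl, hLdef]
        apply image_image_congr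
        intro x _
        omega
      have goalA : Rset (m + 4) = (Lset (m + 4)).image (fun x => fib (m + 7) - 1 - x) := by
        rw [hRdef, ihB]
        apply (image_image_congr U _ _ _ ?_).symm
        intro u hu
        have := hUlt u hu
        omega
      have hLm4lt : ∀ x ∈ Lset (m + 4), x < fib (m + 6) := lset_lt (m + 4)
      refine ⟨goalA, ?_⟩
      show Lset (m + 6) = (Lset (m + 4) ∪ Rset (m + 4)).image (fun x => fib (m + 8) - 1 - x)
      have hLdef6 : Lset (m + 6)
          = (Lset (m + 4)).image (· + fib (m + 6)) ∪ (Rset (m + 4)).image (· + fib (m + 6)) := by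
        show ((Lset (m + 4)) ∪ (Lset (m + 4)).image (· + fib (m + 3))).image (· + fib (m + 6)) = _
        rw [Finset.image_union, Rset_eq (m + 4) (m + 3) rfl]
      rw [hLdef6, Finset.image_union,
        Finset.union_comm ((Lset (m + 4)).image (· + fib (m + 6)))]
      congr 1
      · rw [hRdef, ihB]
        have h1 : (U.image (fun x => x + fib (m + 5))).image (fun x => x + fib (m + 6))
            = U.image (fun x => x + fib (m + 7)) :=
          image_image_congr _ _ _ _ (fun x _ => by omega)
        have h2 : (U.image (fun x => fib (m + 6) - 1 - x)).image (fun x => fib (m + 8) - 1 - x)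
            = U.image (fun x => x + fib (m + 7)) :=
          image_image_congr _ _ _ _ (fun x hx => by have := hUlt x hx; omega)
        rw [h1, h2]
      · rw [goalA]
        apply (image_image_congr (Lset (m + 4)) _ _ _ ?_).symm
        intro x hx
        have := hLm4lt x hx
        omega

/-- For every k ≥ 2: R_k = (f_{k+3} − 1) ⊖ L_k and
L_{k+2} = (f_{k+4} − 1) ⊖ (L_k ∪ R_k). -/
theorem lr_reflection_identities :
    ∀ k : ℕ, 2 ≤ k →
      Rset k = (Lset k).image (fun x => fib (k + 3) - 1 - x) ∧
      Lset (k + 2) = (Lset k ∪ Rset k).image (fun x => fib (k + 4) - 1 - x) := by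
  intro k hk
  obtain ⟨n, rfl⟩ : ∃ n, k = n + 2 := ⟨k - 2, by omega⟩
  exact aux n
end
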